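/- arXiv:1209.3927 — 3 statements merged into one kernel-verified Lean document; each statement's English description precedes it below -/
import Mathlib

section
/- For every n ≥ 0 and every word v of length n over {a,b} beginning with the letter a: |ψ(v)|_b ≤ |ψ(v^(n))|_b = F_{n−1} − 1, with equality if and only if v = v^(n) or v = E(d(v^(n))). -/
/-!
Justin's formula `ψ(x u) = μ_x(ψ(u)) x` holds because `μ_x(p) x` is a palindrome exactly when `p`
is, and every palindromic suffix of `μ_x(w) x y` arises from a palindromic suffix of `w y`; so `μ_x`
carries the shortest palindrome extending `w y` to the shortest one extending `μ_x(w) x y`.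

By the formula, the pair `(|ψ(v)|_b + 1, |ψ(v)|_a + 1)` is `(1, 1)` for the empty word, and
prepending a letter `x` replaces its `x`-entry by the sum of both entries. Induction on the word
then shows that for a word `u` the sum of the entries is at most `F_{|u|+1}`, with equality exactly
for alternating words, and a single entry is at most `F_{|u|}`, with equality exactly when `u` is
empty or is the letter of that entry followed by an alternating word. For `v = a u` the `b`-entry
of `v` is that of `u`, which gives the bound and the two extremal words `abab…` and `abbab…`.
-/

def palClosure (w : List Bool) : List Bool :=
  let k := Nat.find (p := fun k => (w.drop k).reverse = w.drop k)
    ⟨w.length, by simp⟩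
  w.take k ++ w.drop k ++ (w.take k).reverse

def psi (v : List Bool) : List Bool := v.foldl (fun w x => palClosure (w ++ [x])) []

def E (v : List Bool) : List Bool := v.map (!·)

def mu (x : Bool) (w : List Bool) : List Bool := w.flatMap (fun y => if y = x then [x] else [x, y])

def muW : List Bool → List Bool → List Bool
  | [], w => w
  | x :: v, w => mu x (muW v w)

def vN (n : ℕ) : List Bool := (List.range n).map (fun i => decide (i % 2 = 1))

def fibF : ℕ → ℕ
  | 0 => 1
  | 1 => 1
  | n + 2 => fibF (n + 1) + fibF n

def HasPeriod (w : List Bool) (p : ℕ) : Prop :=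
  0 < p ∧ ∀ i j (hi : i < w.length) (hj : j < w.length),
    i % p = j % p → w.get ⟨i, hi⟩ = w.get ⟨j, hj⟩

noncomputable def minPeriod (w : List Bool) : ℕ := sInf {p | HasPeriod w p}

def dOp : List Bool → List Bool
  | x :: y :: u => y :: x :: u
  | w => w

def cOp (v : List Bool) : List Bool := (dOp v.reverse).reverse

def contAux : List ℕ → ℕ
  | [] => 1
  | [a] => a
  | a :: b :: t => a * contAux (b :: t) + contAux t

section ListLemmas

variable {α : Type*}

theorem reverse_append_reverse_take_eq_iff (w : List α) (t : ℕ) :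
    (w ++ (w.take t).reverse).reverse = w ++ (w.take t).reverse ↔
      (w.drop t).reverse = w.drop t := by
  obtain ⟨T, D, rfl, hT, hD⟩ : ∃ T D, w = T ++ D ∧ w.take t = T ∧ w.drop t = D :=
    ⟨_, _, (List.take_append_drop t w).symm, rfl, rfl⟩
  rw [hT, hD]
  simp

theorem eq_append_reverse_take_of_prefix {p w : List α} (hp : p.reverse = p) (hw : w <+: p)
    (hlen : p.length ≤ 2 * w.length) : p = w ++ (w.take (p.length - w.length)).reverse := by
  obtain ⟨r, rfl⟩ := hw
  have hr : r.length ≤ w.length := by simp at hlen; omega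
  have hrev : r.reverse = w.take r.length := by
    have := congrArg (List.take r.length) hp
    rwa [List.reverse_append, List.take_left' (by simp), List.take_append_of_le_length hr] at this
  simp [← hrev]

theorem List.append_singleton_suffix_append_singleton_iff {S l : List α} {a b : α} :
    S ++ [a] <:+ l ++ [b] ↔ a = b ∧ S <:+ l := by
  rw [← List.reverse_prefix]
  simp [List.reverse_prefix]

theorem List.head_eq_last_of_reverse_eq {l m₁ m₂ : List α} {a b : α}
    (hl : l.reverse = l) (h₁ : l = a :: m₁) (h₂ : l = m₂ ++ [b]) : a = b := by
  have := congrArg List.head? hl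
  rw [List.head?_reverse] at this
  nth_rw 1 [h₂] at this
  rw [h₁] at this
  simpa using this.symm

end ListLemmas

-- `w.drop (palSuffixStart w)` is the longest palindromic suffix of `w`.
def palSuffixStart (w : List Bool) : ℕ :=
  Nat.find (p := fun k => (w.drop k).reverse = w.drop k) ⟨w.length, by simp⟩

theorem reverse_drop_palSuffixStart (w : List Bool) :
    (w.drop (palSuffixStart w)).reverse = w.drop (palSuffixStart w) :=
  Nat.find_spec (p := fun k => (w.drop k).reverse = w.drop k) ⟨w.length, by simp⟩

theorem palSuffixStart_le {w : List Bool} {t : ℕ} (h : (w.drop t).reverse = w.drop t) :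
    palSuffixStart w ≤ t :=
  Nat.find_min' _ h

theorem palSuffixStart_le_length (w : List Bool) : palSuffixStart w ≤ w.length :=
  palSuffixStart_le (by simp)

theorem palClosure_eq (w : List Bool) :
    palClosure w = w ++ (w.take (palSuffixStart w)).reverse := by
  change w.take (palSuffixStart w) ++ w.drop (palSuffixStart w) ++ _ = _
  rw [List.take_append_drop]
  rfl

theorem reverse_palClosure (w : List Bool) : (palClosure w).reverse = palClosure w := by
  rw [palClosure_eq, reverse_append_reverse_take_eq_iff]
  exact reverse_drop_palSuffixStart w

theorem prefix_palClosure (w : List Bool) : w <+: palClosure w := by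
  rw [palClosure_eq]; exact List.prefix_append _ _

theorem length_palClosure (w : List Bool) :
    (palClosure w).length = w.length + palSuffixStart w := by
  simp [palClosure_eq, palSuffixStart_le_length]

theorem length_palClosure_le {w p : List Bool} (hp : p.reverse = p) (hw : w <+: p) :
    (palClosure w).length ≤ p.length := by
  rw [length_palClosure]
  have := hw.length_le
  by_cases hlen : p.length ≤ 2 * w.length
  · rw [eq_append_reverse_take_of_prefix hp hw hlen, reverse_append_reverse_take_eq_iff] at hp
    have := palSuffixStart_le hp
    omega
  · have := palSuffixStart_le_length w
    omega

theorem suffix_drop_palSuffixStart {s w : List Bool} (hpal : s.reverse = s)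
    (hs : s <:+ w) : s <:+ w.drop (palSuffixStart w) := by
  rw [List.suffix_iff_eq_drop] at hs
  rw [hs] at hpal ⊢
  exact List.drop_suffix_drop_left w (palSuffixStart_le hpal)

theorem palClosure_eq_of_forall_suffix {w p : List Bool} (hp : p.reverse = p) (hw : w <+: p)
    (hS : ∀ S : List Bool, S.reverse = S → S <:+ w → S.length + p.length ≤ 2 * w.length) :
    palClosure w = p := by
  have hupper := length_palClosure_le hp hw
  have hlower := hS _ (reverse_drop_palSuffixStart w) (List.drop_suffix _ _)
  have hle := palSuffixStart_le_length w
  rw [length_palClosure] at hupper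
  simp only [List.length_drop] at hlower
  have hlen : p.length - w.length = palSuffixStart w := by omega
  rw [eq_append_reverse_take_of_prefix hp hw (by omega), hlen, palClosure_eq]

section Mu

variable (x : Bool)

@[simp] theorem mu_nil : mu x [] = [] := rfl

theorem mu_cons (y : Bool) (u : List Bool) :
    mu x (y :: u) = (if y = x then [x] else [x, y]) ++ mu x u := rfl

@[simp] theorem mu_cons_self (u : List Bool) : mu x (x :: u) = x :: mu x u := by
  simp [mu_cons]

@[simp] theorem mu_cons_not (u : List Bool) : mu x ((!x) :: u) = x :: (!x) :: mu x u := by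
  simp [mu_cons]

theorem mu_append (u v : List Bool) : mu x (u ++ v) = mu x u ++ mu x v :=
  List.flatMap_append

theorem count_mu (c : Bool) (u : List Bool) :
    (mu x u).count c = if c = x then u.length else u.count c := by
  induction u with
  | nil => simp
  | cons y u ih => cases x <;> cases y <;> cases c <;> simp_all [mu_cons]

theorem exists_mu_eq_cons {u : List Bool} (hu : u ≠ []) : ∃ r, mu x u = x :: r := by
  obtain ⟨y, u, rfl⟩ := List.exists_cons_of_ne_nil hu
  obtain rfl | rfl := Bool.eq_or_eq_not y x
  · exact ⟨_, mu_cons_self _ _⟩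
  · exact ⟨_, mu_cons_not _ _⟩

def muInv : List Bool → List Bool
  | [] => []
  | [_] => [x]
  | _ :: b :: r => if b = x then x :: muInv (b :: r) else b :: muInv r

theorem muInv_mu (u : List Bool) : muInv x (mu x u) = u := by
  induction u with
  | nil => rfl
  | cons y u ih =>
    obtain rfl | rfl := Bool.eq_or_eq_not y x
    · rcases eq_or_ne u [] with rfl | hu
      · simp [muInv]
      · obtain ⟨r, hr⟩ := exists_mu_eq_cons y hu
        rw [mu_cons_self, hr, muInv, if_pos rfl, ← hr, ih]
    · rw [mu_cons_not, muInv, if_neg (by simp), ih]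

theorem mu_injective : Function.Injective (mu x) :=
  Function.LeftInverse.injective (muInv_mu x)

theorem mu_reverse_append_singleton (u : List Bool) :
    mu x u.reverse ++ [x] = (mu x u ++ [x]).reverse := by
  induction u with
  | nil => rfl
  | cons y u ih =>
    obtain rfl | rfl := Bool.eq_or_eq_not y x <;> simp [mu_append, ← ih]

theorem length_mu_reverse (u : List Bool) : (mu x u.reverse).length = (mu x u).length := by
  simpa using congrArg List.length (mu_reverse_append_singleton x u)

theorem reverse_mu_append_singleton_eq_iff (u : List Bool) :
    (mu x u ++ [x]).reverse = mu x u ++ [x] ↔ u.reverse = u := by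
  rw [← mu_reverse_append_singleton, List.append_left_inj]
  exact (mu_injective x).eq_iff

theorem mu_prefix_mu {u v : List Bool} (h : u <+: v) : mu x u <+: mu x v :=
  h.flatMap _

theorem mu_suffix_mu {u v : List Bool} (h : u <:+ v) : mu x u <:+ mu x v :=
  h.flatMap _

theorem mu_append_singleton_prefix {u v : List Bool} (h : u <+: v) :
    mu x u ++ [x] <+: mu x v ++ [x] := by
  obtain ⟨t, rfl⟩ := h
  rcases eq_or_ne t [] with rfl | ht
  · simp
  · obtain ⟨r, hr⟩ := exists_mu_eq_cons x ht
    exact ⟨r ++ [x], by simp [mu_append, hr]⟩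

theorem suffix_mu_cases {S u : List Bool} (hS : S <:+ mu x u) :
    (∃ s, s <:+ u ∧ S = mu x s) ∨ ∃ t, (!x) :: t <:+ u ∧ S = (!x) :: mu x t := by
  induction u with
  | nil => exact .inl ⟨[], List.nil_suffix, by simpa using hS⟩
  | cons y u ih =>
    have lift : S <:+ mu x u → (∃ s, s <:+ y :: u ∧ S = mu x s) ∨
        ∃ t, (!x) :: t <:+ y :: u ∧ S = (!x) :: mu x t := fun h =>
      (ih h).imp (fun ⟨s, hs, e⟩ => ⟨s, hs.trans (List.suffix_cons _ _), e⟩)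
        (fun ⟨t, ht, e⟩ => ⟨t, ht.trans (List.suffix_cons _ _), e⟩)
    obtain rfl | rfl := Bool.eq_or_eq_not y x
    · rw [mu_cons_self, List.suffix_cons_iff] at hS
      rcases hS with rfl | hS
      · exact .inl ⟨_, List.suffix_refl _, (mu_cons_self y u).symm⟩
      · exact lift hS
    · rw [mu_cons_not, List.suffix_cons_iff, List.suffix_cons_iff] at hS
      rcases hS with rfl | rfl | hS
      · exact .inl ⟨_, List.suffix_refl _, (mu_cons_not x u).symm⟩
      · exact .inr ⟨u, List.suffix_refl _, rfl⟩
      · exact lift hS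

theorem exists_palindrome_of_suffix_mu_append_singleton {S u : List Bool} (hS : S.reverse = S)
    (hsuf : S <:+ mu x u ++ [x]) :
    ∃ s, s.reverse = s ∧ s <:+ u ∧ S.length ≤ (mu x s).length + 1 := by
  rcases List.eq_nil_or_concat S with rfl | ⟨S, a, rfl⟩
  · exact ⟨[], rfl, List.nil_suffix, by simp⟩
  rw [List.concat_eq_append, List.append_singleton_suffix_append_singleton_iff] at hsuf
  obtain ⟨ha, hsuf⟩ := hsuf
  subst a
  rcases suffix_mu_cases x hsuf with ⟨s, hsu, rfl⟩ | ⟨t, -, rfl⟩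
  · rw [List.concat_eq_append, reverse_mu_append_singleton_eq_iff] at hS
    exact ⟨s, hS, hsu, by simp⟩
  · exact absurd (List.head_eq_last_of_reverse_eq hS rfl (List.concat_eq_append ..))
      (Bool.not_ne_self x)

theorem exists_palindrome_of_suffix_mu_append_not {S w : List Bool} (hS : S.reverse = S)
    (hsuf : S <:+ mu x (w ++ [!x])) :
    ∃ s, s.reverse = s ∧ s <:+ w ++ [!x] ∧ S.length + 1 ≤ (mu x s).length := by
  rcases suffix_mu_cases x hsuf with ⟨s, hsu, rfl⟩ | ⟨t, htu, rfl⟩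
  · rcases List.eq_nil_or_concat s with rfl | ⟨s, a, rfl⟩
    · exact ⟨[!x], rfl, List.suffix_append _ _, by simp⟩
    rw [List.concat_eq_append, List.append_singleton_suffix_append_singleton_iff] at hsu
    rw [List.concat_eq_append] at hS
    obtain ⟨ha, -⟩ := hsu
    subst a
    obtain ⟨r, hr⟩ := exists_mu_eq_cons x (u := s ++ [!x]) (by simp)
    refine absurd (List.head_eq_last_of_reverse_eq hS hr (m₂ := mu x s ++ [x]) ?_)
      (Bool.not_ne_self x).symm
    simp [mu_append]
  · refine ⟨(!x) :: t, ?_, htu, by simp⟩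
    have hwrap : ∀ S : List Bool, S.reverse = S → (x :: S ++ [x]).reverse = x :: S ++ [x] :=
      fun S h => by simp [h]
    rw [← reverse_mu_append_singleton_eq_iff, mu_cons_not]
    exact hwrap _ hS

theorem length_mu_palClosure_add (u : List Bool) :
    (mu x (palClosure u)).length + (mu x (u.drop (palSuffixStart u))).length =
      2 * (mu x u).length := by
  have h := congrArg (fun l => (mu x l).length) (List.take_append_drop (palSuffixStart u) u)
  simp only [mu_append, List.length_append] at h
  rw [palClosure_eq, mu_append, List.length_append, length_mu_reverse]
  omega

theorem palClosure_mu_append_pair (w : List Bool) (y : Bool) :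
    palClosure (mu x w ++ [x, y]) = mu x (palClosure (w ++ [y])) ++ [x] := by
  set u := w ++ [y]
  have hlen := length_mu_palClosure_add x u
  have hmax : ∀ s, s.reverse = s → s <:+ u →
      (mu x s).length ≤ (mu x (u.drop (palSuffixStart u))).length := fun s hs hsu =>
    (mu_suffix_mu x (suffix_drop_palSuffixStart hs hsu)).length_le
  have hpal : (mu x (palClosure u) ++ [x]).reverse = mu x (palClosure u) ++ [x] :=
    (reverse_mu_append_singleton_eq_iff x _).2 (reverse_palClosure u)
  obtain rfl | rfl := Bool.eq_or_eq_not y x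
  · have hW : mu y w ++ [y, y] = mu y u ++ [y] := by simp [u, mu_append]
    rw [hW]
    refine palClosure_eq_of_forall_suffix hpal
      (mu_append_singleton_prefix y (prefix_palClosure u)) fun S hS hsuf => ?_
    obtain ⟨s, hs, hsu, hSs⟩ := exists_palindrome_of_suffix_mu_append_singleton y hS hsuf
    have := hmax s hs hsu
    simp only [List.length_append, List.length_singleton]
    omega
  · have hW : mu x w ++ [x, !x] = mu x u := by simp [u, mu_append]
    rw [hW]
    refine palClosure_eq_of_forall_suffix hpal
      ((mu_prefix_mu x (prefix_palClosure u)).trans (List.prefix_append _ _)) fun S hS hsuf => ?_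
    obtain ⟨s, hs, hsu, hSs⟩ := exists_palindrome_of_suffix_mu_append_not x hS hsuf
    have := hmax s hs hsu
    simp only [List.length_append, List.length_singleton]
    omega

end Mu

theorem psi_append_singleton (v : List Bool) (y : Bool) :
    psi (v ++ [y]) = palClosure (psi v ++ [y]) := by
  simp [psi, List.foldl_append]

theorem palClosure_singleton (x : Bool) : palClosure [x] = [x] := by
  have h : palSuffixStart [x] = 0 := Nat.le_zero.mp (palSuffixStart_le (by simp))
  simp [palClosure_eq, h]

theorem psi_cons (x : Bool) (u : List Bool) : psi (x :: u) = mu x (psi u) ++ [x] := by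
  induction u using List.reverseRecOn with
  | nil => exact palClosure_singleton x
  | append_singleton u y ih =>
    rw [← List.cons_append, psi_append_singleton, ih, List.append_assoc, List.singleton_append,
      palClosure_mu_append_pair, ← psi_append_singleton]

-- `closureWeight v c = |ψ(v)|_c + 1`, see `count_psi_add_one`.
def closureWeight : List Bool → Bool → ℕ
  | [], _ => 1
  | x :: u, c => if c = x then closureWeight u true + closureWeight u false else closureWeight u c

theorem count_psi_add_one (v : List Bool) (c : Bool) :
    (psi v).count c + 1 = closureWeight v c := by
  induction v generalizing c with
  | nil => rfl
  | cons x u ih =>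
    rw [psi_cons, List.count_append, count_mu, closureWeight]
    by_cases h : c = x
    · have := List.count_true_add_count_false (psi u)
      simp [h, ← ih true, ← ih false]
      omega
    · simp [h, Ne.symm h, ← ih c]

theorem closureWeight_pos (u : List Bool) (c : Bool) : 0 < closureWeight u c := by
  induction u generalizing c with
  | nil => exact Nat.one_pos
  | cons x u ih => unfold closureWeight; split <;> simp [ih]

def altWord : Bool → ℕ → List Bool
  | _, 0 => []
  | s, n + 1 => s :: altWord (!s) n

theorem cons_eq_altWord_iff {y s : Bool} {r : List Bool} {n : ℕ} :
    y :: r = altWord s n ↔ ∃ m, n = m + 1 ∧ s = y ∧ r = altWord (!y) m := by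
  cases n with
  | zero => simp [altWord]
  | succ m =>
    simp only [altWord, List.cons.injEq, Nat.add_right_cancel_iff, exists_eq_left']
    constructor
    · rintro ⟨rfl, rfl⟩; exact ⟨rfl, rfl⟩
    · rintro ⟨rfl, rfl⟩; exact ⟨rfl, rfl⟩

theorem exists_cons_eq_altWord_iff (x : Bool) (u : List Bool) :
    (∃ s n, x :: u = altWord s n) ↔
      (∃ s n, u = altWord s n) ∧ (u = [] ∨ ∃ s n, u = (!x) :: altWord s n) := by
  simp only [cons_eq_altWord_iff]
  constructor
  · rintro ⟨s, n, m, rfl, rfl, rfl⟩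
    refine ⟨⟨_, _, rfl⟩, ?_⟩
    cases m with
    | zero => exact .inl rfl
    | succ m => exact .inr ⟨_, _, rfl⟩
  · rintro ⟨⟨s, n, rfl⟩, h | ⟨s', n', h⟩⟩
    · cases n with
      | zero => exact ⟨x, 1, 0, rfl, rfl, rfl⟩
      | succ n => simp [altWord] at h
    · obtain ⟨m, rfl, rfl, -⟩ := cons_eq_altWord_iff.1 h.symm
      exact ⟨x, m + 2, m + 1, rfl, rfl, rfl⟩

theorem closureWeight_cons_self (x : Bool) (u : List Bool) :
    closureWeight (x :: u) x = closureWeight u true + closureWeight u false := by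
  simp [closureWeight]

theorem closureWeight_cons_of_ne {c x : Bool} (h : c ≠ x) (u : List Bool) :
    closureWeight (x :: u) c = closureWeight u c := by
  simp [closureWeight, h]

theorem closureWeight_add_closureWeight_not (u : List Bool) (c : Bool) :
    closureWeight u c + closureWeight u (!c) = closureWeight u true + closureWeight u false := by
  cases c <;> simp [Nat.add_comm]

theorem closureWeight_cons_le_and_eq_iff (c y : Bool) (u : List Bool)
    (hle : closureWeight u true + closureWeight u false ≤ fibF (u.length + 2))
    (heq : closureWeight u true + closureWeight u false = fibF (u.length + 2) ↔
      ∃ s n, u = altWord s n) :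
    closureWeight (y :: u) c ≤ fibF (u.length + 2) ∧
      (closureWeight (y :: u) c = fibF (u.length + 2) ↔ ∃ s n, y :: u = c :: altWord s n) := by
  by_cases h : c = y
  · subst h
    simp only [closureWeight_cons_self, List.cons.injEq, true_and]
    exact ⟨hle, heq⟩
  · rw [closureWeight_cons_of_ne h]
    rw [← closureWeight_add_closureWeight_not u c] at hle
    have := closureWeight_pos u (!c)
    exact ⟨by omega, fun _ => by omega,
      fun ⟨_, _, h'⟩ => absurd (List.head_eq_of_cons_eq h').symm h⟩

theorem closureWeight_le_and_eq_iff (u : List Bool) :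
    (closureWeight u true + closureWeight u false ≤ fibF (u.length + 2) ∧
      (closureWeight u true + closureWeight u false = fibF (u.length + 2) ↔
        ∃ s n, u = altWord s n)) ∧
    ∀ c, closureWeight u c ≤ fibF (u.length + 1) ∧
      (closureWeight u c = fibF (u.length + 1) ↔ u = [] ∨ ∃ s n, u = c :: altWord s n) := by
  induction u with
  | nil => exact ⟨⟨le_rfl, iff_of_true rfl ⟨true, 0, rfl⟩⟩, fun c => by simp [closureWeight, fibF]⟩
  | cons x u ih =>
    obtain ⟨⟨hle, heq⟩, hw⟩ := ih
    refine ⟨?_, fun c => ?_⟩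
    · obtain ⟨hwle, hweq⟩ := hw (!x)
      have hsum : closureWeight (x :: u) true + closureWeight (x :: u) false =
          (closureWeight u true + closureWeight u false) + closureWeight u (!x) := by
        rw [← closureWeight_add_closureWeight_not _ x, closureWeight_cons_self,
          closureWeight_cons_of_ne (Bool.not_ne_self x)]
      have hfib : fibF ((x :: u).length + 2) = fibF (u.length + 2) + fibF (u.length + 1) := rfl
      rw [hsum, hfib, exists_cons_eq_altWord_iff, ← heq, ← hweq]
      omega
    · simpa using closureWeight_cons_le_and_eq_iff c x u hle heq

theorem length_altWord (s : Bool) (n : ℕ) : (altWord s n).length = n := by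
  induction n generalizing s <;> simp [altWord, *]

theorem E_cons (x : Bool) (l : List Bool) : E (x :: l) = (!x) :: E l := rfl

theorem E_altWord (s : Bool) (n : ℕ) : E (altWord s n) = altWord (!s) n := by
  induction n generalizing s with
  | zero => rfl
  | succ n ih => rw [altWord, E_cons, ih, altWord]

theorem vN_eq_altWord (n : ℕ) : vN n = altWord false n := by
  suffices h : ∀ s, (List.range n).map (fun i => s ^^ decide (i % 2 = 1)) = altWord s n by
    simpa [vN] using h false
  induction n with
  | zero => simp [altWord]
  | succ n ih =>
    intro s
    rw [List.range_succ_eq_map, List.map_cons, List.map_map, altWord, ← ih (!s)]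
    refine congrArg₂ _ (by simp) (List.map_congr_left fun i _ => ?_)
    rcases Nat.mod_two_eq_zero_or_one i with h | h <;> simp [Nat.add_mod, h]

theorem closureWeight_vN (n : ℕ) : closureWeight (vN n) true = fibF n := by
  cases n with
  | zero => rfl
  | succ m =>
    rw [vN_eq_altWord, altWord, closureWeight_cons_of_ne (by decide)]
    have heq := ((closureWeight_le_and_eq_iff (altWord true m)).2 true).2
    rw [length_altWord] at heq
    refine heq.2 ?_
    cases m with
    | zero => exact .inl rfl
    | succ m => exact .inr ⟨_, _, rfl⟩

theorem cons_eq_vN_or_E_dOp_vN_iff (u : List Bool) :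
    (false :: u = vN (u.length + 1) ∨ false :: u = E (dOp (vN (u.length + 1)))) ↔
      u = [] ∨ ∃ s n, u = true :: altWord s n := by
  cases u with
  | nil => simp [vN, dOp, E]
  | cons y r =>
    simp only [vN_eq_altWord, List.length_cons, altWord, Bool.not_false, Bool.not_true, dOp,
      E_cons, E_altWord, List.cons.injEq, true_and, reduceCtorEq, false_or]
    constructor
    · rintro (h | h) <;> exact ⟨_, _, h⟩
    · rintro ⟨s, n, h⟩
      have hn : n = r.length := by simpa [length_altWord] using (congrArg List.length h.2).symm
      subst hn
      cases s
      · exact .inl h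
      · exact .inr h

theorem stmt16 (n : ℕ) (v : List Bool) (hv : v.length = n) (ha : v.head? = some false) :
    (psi v).count true ≤ (psi (vN n)).count true ∧
    (psi (vN n)).count true = fibF n - 1 ∧
    ((psi v).count true = (psi (vN n)).count true ↔
      v = vN n ∨ v = E (dOp (vN n))) := by
  obtain ⟨u, rfl⟩ : ∃ u, v = false :: u := by
    cases v with
    | nil => simp at ha
    | cons x u => exact ⟨u, by simpa using ha⟩
  subst hv
  rw [List.length_cons]
  have hcount := count_psi_add_one (false :: u) true
  have hN := count_psi_add_one (vN (u.length + 1)) true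
  rw [closureWeight_cons_of_ne (by decide)] at hcount
  rw [closureWeight_vN] at hN
  obtain ⟨hle, heq⟩ := (closureWeight_le_and_eq_iff u).2 true
  refine ⟨by omega, by omega, ?_⟩
  rw [cons_eq_vN_or_E_dOp_vN_iff, ← heq]
  omega
end

section
/- For n ≥ 1 and any integer x with 0 < x ≤ n: x·F_{n−x} + F_{n−x+1} ≤ F_{n+1}, with equality if and only if x = 1. -/
lemma fibF_pos : ∀ n, 1 ≤ fibF n := by
  intro n
  induction n using Nat.twoStepInduction with
  | zero => simp [fibF]
  | one => simp [fibF]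
  | more k ih1 ih2 => show 1 ≤ fibF (k+1) + fibF k; omega

lemma key17 (n : ℕ) (hn : 1 ≤ n) :
    ∀ x, 1 ≤ x → x ≤ n →
      x * fibF (n - x + 1) + fibF (n - x + 2) + (x - 1) ≤ fibF (n + 2) := by
  intro x hx
  induction x, hx using Nat.le_induction with
  | base =>
    intro _
    have h1 : n - 1 + 1 = n := by omega
    have h2 : n - 1 + 2 = n + 1 := by omega
    rw [h1, h2]
    have : fibF (n + 2) = fibF (n + 1) + fibF n := rfl
    omega
  | succ x hx ih =>
    intro hxn
    have hxn' : x ≤ n := by omega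
    have ihx := ih hxn'
    obtain ⟨m, hm⟩ : ∃ m, n - x = m + 1 := ⟨n - x - 1, by omega⟩
    have h1 : n - (x + 1) = m := by omega
    rw [h1]
    rw [hm] at ihx
    have e1 : fibF (m + 2) = fibF (m + 1) + fibF m := rfl
    have e2 : fibF (m + 1 + 2) = fibF (m + 2) + fibF (m + 1) := rfl
    have hp := fibF_pos m
    have hx1 : 1 ≤ x * fibF m := Nat.one_le_iff_ne_zero.mpr (by positivity)
    obtain ⟨y, rfl⟩ : ∃ y, x = y + 1 := ⟨x - 1, by omega⟩
    have e3 : (y + 1) * fibF (m + 1 + 1) = (y + 1) * fibF (m + 1) + (y + 1) * fibF m := by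
      rw [show m + 1 + 1 = m + 2 from rfl, e1]; ring
    rw [e3, e2] at ihx
    simp only [Nat.add_sub_cancel] at *
    linarith

theorem stmt17 (n x : ℕ) (hn : 1 ≤ n) (hx0 : 0 < x) (hxn : x ≤ n) :
    x * fibF (n - x + 1) + fibF (n - x + 2) ≤ fibF (n + 2) ∧
    (x * fibF (n - x + 1) + fibF (n - x + 2) = fibF (n + 2) ↔ x = 1) := by
  have hkey := key17 n hn x hx0 hxn
  constructor
  · omega
  · constructor
    · intro h
      by_contra hne
      have : 2 ≤ x := by omega
      omega
    · intro h
      subst h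
      have h1 : n - 1 + 1 = n := by omega
      have h2 : n - 1 + 2 = n + 1 := by omega
      rw [h1, h2]
      have : fibF (n + 2) = fibF (n + 1) + fibF n := rfl
      omega
end

section
/- Let n ≥ 0 and let α_0, α_1, …, α_m be integers with α_0 ≥ 0, α_i > 0 for 1 ≤ i ≤ m, and α_0 + α_1 + ⋯ + α_m = n. Then K[α_0+1, α_1, …, α_{m−1}, α_m+1] ≤ F_{n+1}, with equality if and only if (m = n, α_0 = 0 and α_1 = ⋯ = α_n = 1) or (m = n−1 and α_0 = α_1 = ⋯ = α_{n−1} = 1). -/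
def continuant (l : List ℕ) : ℕ := contAux l.reverse


lemma fibF_add_two (n : ℕ) : fibF (n + 2) = fibF (n + 1) + fibF n := rfl

lemma fibF_eq_fib (n : ℕ) : fibF n = Nat.fib (n + 1) := by
  induction n using fibF.induct with
  | case1 => rfl
  | case2 => rfl
  | case3 n ih₁ ih₀ => rw [fibF_add_two, ih₁, ih₀, Nat.fib_add_two (n := n + 1), add_comm]

lemma fibF_pos_s18 (n : ℕ) : 0 < fibF n := by
  rw [fibF_eq_fib]
  exact Nat.fib_pos.mpr n.succ_pos

lemma fibF_mono : Monotone fibF := fun a b hab => by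
  simpa only [fibF_eq_fib] using Nat.fib_mono (Nat.succ_le_succ hab)

lemma fibF_succ_strictMono : StrictMono fun n => fibF (n + 1) := by
  simpa only [fibF_eq_fib] using Nat.fib_add_two_strictMono

lemma fibF_add_eq_fibF_iff (k n : ℕ) : fibF (k + n) = fibF n ↔ k = 0 ∨ n = 0 ∧ k = 1 := by
  rcases n with _ | n
  · rcases k with _ | k
    · simp
    · have := fibF_succ_strictMono.injective.eq_iff (a := k) (b := 0)
      simp_all [fibF]
  · rw [← Nat.add_assoc]
    exact (fibF_succ_strictMono.injective.eq_iff (a := k + n) (b := n)).trans (by omega)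

lemma mul_fibF_succ_add_fibF_le {a : ℕ} (ha : 0 < a) (c : ℕ) :
    a * fibF (c + 1) + fibF c ≤ fibF (a + c + 1) := by
  induction a, ha using Nat.le_induction with
  | base =>
    show 1 * fibF (c + 1) + fibF c ≤ fibF (1 + c + 1)
    rw [show 1 + c + 1 = c + 2 by omega, fibF_add_two, one_mul]
  | succ a ha ih =>
    calc (a + 1) * fibF (c + 1) + fibF c = (a * fibF (c + 1) + fibF c) + fibF (c + 1) := by ring
      _ ≤ fibF (a + c + 1) + fibF (a + c) := add_le_add ih (fibF_mono (by omega))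
      _ = fibF (a + 1 + c + 1) := by rw [Nat.add_right_comm a 1 c, fibF_add_two]

lemma mul_fibF_succ_add_fibF_lt {a : ℕ} (ha : 3 ≤ a) (c : ℕ) :
    a * fibF (c + 1) + fibF c < fibF (a + c + 1) := by
  induction a, ha using Nat.le_induction with
  | base =>
    have := fibF_pos_s18 c
    simp only [show 3 + c + 1 = c + 2 + 2 by omega, fibF_add_two]
    omega
  | succ a ha ih =>
    calc (a + 1) * fibF (c + 1) + fibF c = (a * fibF (c + 1) + fibF c) + fibF (c + 1) := by ring
      _ < fibF (a + c + 1) + fibF (a + c) := add_lt_add_of_lt_of_le ih (fibF_mono (by omega))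
      _ = fibF (a + 1 + c + 1) := by rw [Nat.add_right_comm a 1 c, fibF_add_two]

lemma mul_fibF_succ_add_fibF_eq_iff {a : ℕ} (ha : 0 < a) (c : ℕ) :
    a * fibF (c + 1) + fibF c = fibF (a + c + 1) ↔ a ≤ 2 := by
  refine ⟨fun h => ?_, fun h => ?_⟩
  · by_contra! h3
    exact (mul_fibF_succ_add_fibF_lt h3 c).ne h
  · interval_cases a
    · rw [show 1 + c + 1 = c + 2 by omega, fibF_add_two, one_mul]
    · simp only [show 2 + c + 1 = c + 1 + 2 by omega, fibF_add_two]; ring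

lemma le_fibF (n : ℕ) : n ≤ fibF n := by
  rcases Nat.lt_or_ge n 2 with hn | hn
  · interval_cases n <;> decide
  · obtain ⟨k, rfl⟩ : ∃ k, n = k + 1 := ⟨n - 1, by omega⟩
    simpa [fibF] using mul_fibF_succ_add_fibF_le (a := k) (by omega) 0

lemma fibF_eq_self_iff {n : ℕ} (hn : 0 < n) : fibF n = n ↔ n ≤ 3 := by
  obtain ⟨k, rfl⟩ : ∃ k, n = k + 1 := ⟨n - 1, by omega⟩
  rcases k.eq_zero_or_pos with rfl | hk
  · decide
  · have := mul_fibF_succ_add_fibF_eq_iff hk 0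
    simp only [fibF, mul_one, add_zero] at this
    omega

def IsOnesThenLeTwo : List ℕ → Prop
  | [] => True
  | [a] => a ≤ 2
  | a :: b :: t => a = 1 ∧ IsOnesThenLeTwo (b :: t)

def IsFibShape : List ℕ → Prop
  | [] => True
  | [a] => a ≤ 3
  | a :: b :: t => a ≤ 2 ∧ IsOnesThenLeTwo (b :: t)

lemma isOnesThenLeTwo_cons_of_ne_nil {l : List ℕ} (hl : l ≠ []) (a : ℕ) :
    IsOnesThenLeTwo (a :: l) ↔ a = 1 ∧ IsOnesThenLeTwo l := by
  cases l with
  | nil => exact absurd rfl hl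
  | cons b t => rfl

lemma isFibShape_cons_of_ne_nil {l : List ℕ} (hl : l ≠ []) (a : ℕ) :
    IsFibShape (a :: l) ↔ a ≤ 2 ∧ IsOnesThenLeTwo l := by
  cases l with
  | nil => exact absurd rfl hl
  | cons b t => rfl

lemma IsOnesThenLeTwo.isFibShape : ∀ {l : List ℕ}, IsOnesThenLeTwo l → IsFibShape l
  | [], _ => trivial
  | [_], h => Nat.le_succ_of_le h
  | _ :: _ :: _, ⟨ha, h⟩ => ⟨ha.trans_le one_le_two, h⟩

lemma isOnesThenLeTwo_cons_iff {b : ℕ} (hb : 0 < b) (t : List ℕ) :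
    IsOnesThenLeTwo (b :: t) ↔ IsFibShape (b :: t) ∧ IsFibShape t ∧ (b = 1 ∨ t = [] ∧ b = 2) := by
  cases t with
  | nil => simp only [IsOnesThenLeTwo, IsFibShape, true_and]; omega
  | cons d t =>
    simp only [IsOnesThenLeTwo, IsFibShape, reduceCtorEq, false_and, or_false]
    constructor
    · rintro ⟨rfl, h⟩
      exact ⟨⟨one_le_two, h⟩, h.isFibShape, rfl⟩
    · rintro ⟨⟨-, h⟩, -, rfl⟩
      exact ⟨rfl, h⟩

theorem contAux_le_fibF_sum (l : List ℕ) (hl : ∀ x ∈ l, 0 < x) : contAux l ≤ fibF l.sum := by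
  induction l using contAux.induct with
  | case1 => exact le_rfl
  | case2 a => exact le_fibF a
  | case3 a b t ih₁ ih₂ =>
    have hbt : ∀ x ∈ b :: t, 0 < x := fun x hx => hl x (.tail a hx)
    have ht : ∀ x ∈ t, 0 < x := fun x hx => hbt x (.tail b hx)
    have ha := hl a (.head _)
    obtain ⟨c, rfl⟩ : ∃ c, b = c + 1 := ⟨b - 1, by have := hbt b (.head _); omega⟩
    calc contAux (a :: (c + 1) :: t) = a * contAux ((c + 1) :: t) + contAux t := rfl
      _ ≤ a * fibF (c + t.sum + 1) + fibF (c + t.sum) := by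
        gcongr
        · simpa [Nat.add_right_comm] using ih₁ hbt
        · exact (ih₂ ht).trans (fibF_mono (Nat.le_add_left _ _))
      _ ≤ fibF (a + (c + t.sum) + 1) := mul_fibF_succ_add_fibF_le ha _
      _ = fibF (a :: (c + 1) :: t).sum := by simp only [List.sum_cons]; ring_nf

theorem contAux_eq_fibF_sum_iff (l : List ℕ) (hl : ∀ x ∈ l, 0 < x) :
    contAux l = fibF l.sum ↔ IsFibShape l := by
  induction l using contAux.induct with
  | case1 => exact iff_of_true rfl trivial
  | case2 a => exact eq_comm.trans (fibF_eq_self_iff (hl a (.head _)))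
  | case3 a b t ih₁ ih₂ =>
    have hbt : ∀ x ∈ b :: t, 0 < x := fun x hx => hl x (.tail a hx)
    have ht : ∀ x ∈ t, 0 < x := fun x hx => hbt x (.tail b hx)
    have ha := hl a (.head _)
    have hb := hbt b (.head _)
    obtain ⟨c, rfl⟩ : ∃ c, b = c + 1 := ⟨b - 1, by omega⟩
    have hK₁ : contAux ((c + 1) :: t) ≤ fibF (c + t.sum + 1) := by
      simpa [Nat.add_right_comm] using contAux_le_fibF_sum _ hbt
    have hK₂ := contAux_le_fibF_sum t ht
    have hF : fibF t.sum ≤ fibF (c + t.sum) := fibF_mono (Nat.le_add_left _ _)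
    have hkey := mul_fibF_succ_add_fibF_le ha (c + t.sum)
    have hkey_iff := mul_fibF_succ_add_fibF_eq_iff ha (c + t.sum)
    have hmul := Nat.mul_le_mul_left a hK₁
    have hsum : (a :: (c + 1) :: t).sum = a + (c + t.sum) + 1 := by simp only [List.sum_cons]; ring
    have hnil : t.sum = 0 ↔ t = [] := by
      rw [List.sum_eq_zero_iff, List.eq_nil_iff_forall_not_mem]
      exact forall_congr' fun x => ⟨fun h hx => (ht x hx).ne' (h hx), fun h hx => absurd hx h⟩
    -- with `T = t.sum`, equality forces every step of
    -- `a·K[b,…] + K[…] ≤ a·F(c+T+1) + F(T) ≤ a·F(c+T+1) + F(c+T) ≤ F(a+c+T+1)` to be tight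
    have htight : contAux (a :: (c + 1) :: t) = fibF (a + (c + t.sum) + 1) ↔
        a ≤ 2 ∧ contAux ((c + 1) :: t) = fibF ((c + 1) :: t).sum ∧ contAux t = fibF t.sum ∧
          fibF (c + t.sum) = fibF t.sum := by
      rw [← hkey_iff, show ((c + 1) :: t).sum = c + t.sum + 1 by simp only [List.sum_cons]; ring]
      show a * contAux ((c + 1) :: t) + contAux t = _ ↔ _
      constructor
      · intro h
        have hmul_eq : a * contAux ((c + 1) :: t) = a * fibF (c + t.sum + 1) := by omega
        exact ⟨by omega, Nat.eq_of_mul_eq_mul_left ha hmul_eq, by omega, by omega⟩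
      · rintro ⟨h, h₁, h₂, h₃⟩
        rw [h₁, h₂, ← h₃, ← h]
    rw [hsum, htight, ih₁ hbt, ih₂ ht, fibF_add_eq_fibF_iff, hnil,
      isFibShape_cons_of_ne_nil (List.cons_ne_nil _ _), isOnesThenLeTwo_cons_iff hb]
    simp only [Nat.add_eq_right, Nat.reduceEqDiff]

def bumpEnds (α : ℕ → ℕ) (m i : ℕ) : ℕ :=
  α i + (if i = 0 then 1 else 0) + (if i = m then 1 else 0)

lemma bumpEnds_pos {α : ℕ → ℕ} {m : ℕ} (hα : ∀ i, 1 ≤ i → i ≤ m → 0 < α i) {i : ℕ}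
    (hi : i ≤ m) : 0 < bumpEnds α m i := by
  unfold bumpEnds
  rcases i.eq_zero_or_pos with rfl | hi₀
  · simp
  · have := hα i hi₀ hi
    omega

lemma sum_bumpEnds (α : ℕ → ℕ) (m : ℕ) :
    ∑ i ∈ Finset.range (m + 1), bumpEnds α m i = ∑ i ∈ Finset.range (m + 1), α i + 2 := by
  simp only [bumpEnds, Finset.sum_add_distrib, Finset.sum_ite_eq', Finset.mem_range]
  simp

lemma isOnesThenLeTwo_reverse_map_range (g : ℕ → ℕ) (k : ℕ) :
    IsOnesThenLeTwo ((List.range (k + 1)).map g).reverse ↔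
      (∀ i, 1 ≤ i → i ≤ k → g i = 1) ∧ g 0 ≤ 2 := by
  induction k with
  | zero => exact ⟨fun h => ⟨fun i hi hi₀ => absurd hi₀ (by omega), h⟩, And.right⟩
  | succ k ih =>
    rw [List.range_succ, List.map_append, List.reverse_append, List.map_singleton,
      List.reverse_singleton, List.singleton_append,
      isOnesThenLeTwo_cons_of_ne_nil (by simp), ih]
    constructor
    · rintro ⟨hk, hones, h₀⟩
      refine ⟨fun i hi hik => ?_, h₀⟩
      rcases Nat.lt_or_eq_of_le hik with hik | rfl
      exacts [hones i hi (by omega), hk]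
    · rintro ⟨hones, h₀⟩
      exact ⟨hones _ (by omega) le_rfl, fun i hi hik => hones i hi (by omega), h₀⟩

lemma isFibShape_reverse_map_bumpEnds_iff {α : ℕ → ℕ} {m : ℕ}
    (hα : ∀ i, 1 ≤ i → i ≤ m → 0 < α i) :
    IsFibShape ((List.range (m + 1)).map (bumpEnds α m)).reverse ↔
      α 0 ≤ 1 ∧ ∀ i, 1 ≤ i → i ≤ m → α i = 1 := by
  rcases m with _ | k
  · show IsFibShape [bumpEnds α 0 0] ↔ _
    rw [show bumpEnds α 0 0 = α 0 + 2 by simp [bumpEnds]]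
    show α 0 + 2 ≤ 3 ↔ _
    exact ⟨fun h => ⟨by omega, fun i hi hi₀ => absurd hi₀ (by omega)⟩, fun h => by omega⟩
  · have hmid : (∀ i, 1 ≤ i → i ≤ k → bumpEnds α (k + 1) i = 1) ↔
        ∀ i, 1 ≤ i → i ≤ k → α i = 1 :=
      forall_congr' fun i => imp_congr_right fun hi => imp_congr_right fun hik => by
        rw [bumpEnds, if_neg (by omega), if_neg (by omega), add_zero, add_zero]
    have hlast : bumpEnds α (k + 1) (k + 1) = α (k + 1) + 1 := by simp [bumpEnds]
    have hfirst : bumpEnds α (k + 1) 0 = α 0 + 1 := by simp [bumpEnds]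
    have hpos := hα (k + 1) (Nat.le_add_left 1 k) le_rfl
    rw [List.range_succ, List.map_append, List.reverse_append, List.map_singleton,
      List.reverse_singleton, List.singleton_append, isFibShape_cons_of_ne_nil (by simp),
      isOnesThenLeTwo_reverse_map_range, hmid, hlast, hfirst]
    constructor
    · rintro ⟨hk, hones, h₀⟩
      refine ⟨by omega, fun i hi hik => ?_⟩
      rcases Nat.lt_or_eq_of_le hik with hik | rfl
      exacts [hones i hi (by omega), by omega]
    · rintro ⟨h₀, hones⟩
      have := hones (k + 1) (Nat.le_add_left 1 k) le_rfl
      exact ⟨by omega, fun i hi hik => hones i hi (by omega), by omega⟩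

lemma le_one_and_ones_iff_of_sum_eq {n m : ℕ} {α : ℕ → ℕ}
    (hsum : ∑ i ∈ Finset.range (m + 1), α i = n) :
    (α 0 ≤ 1 ∧ ∀ i, 1 ≤ i → i ≤ m → α i = 1) ↔
      (m = n ∧ α 0 = 0 ∧ ∀ i, 1 ≤ i → i ≤ n → α i = 1) ∨
        (m + 1 = n ∧ ∀ i, i ≤ n - 1 → α i = 1) := by
  constructor
  · rintro ⟨h₀, hones⟩
    have hn : α 0 + m = n := by
      rw [← hsum, Finset.sum_range_succ', Finset.sum_congr rfl fun i hi => hones (i + 1)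
        (Nat.le_add_left 1 i) (Finset.mem_range.mp hi)]
      simp [add_comm]
    rcases Nat.le_one_iff_eq_zero_or_eq_one.mp h₀ with h₀ | h₀
    · exact Or.inl ⟨by omega, h₀, fun i hi hin => hones i hi (by omega)⟩
    · refine Or.inr ⟨by omega, fun i hi => ?_⟩
      rcases i.eq_zero_or_pos with rfl | hi₀
      exacts [h₀, hones i hi₀ (by omega)]
  · rintro (⟨rfl, h₀, hones⟩ | ⟨rfl, hones⟩)
    · exact ⟨by omega, hones⟩
    · exact ⟨(hones 0 (Nat.zero_le _)).le, fun i _ him => hones i (by omega)⟩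

theorem stmt18 (n m : ℕ) (α : ℕ → ℕ)
    (h1 : ∀ i, 1 ≤ i → i ≤ m → 0 < α i)
    (hsum : (Finset.range (m + 1)).sum α = n) :
    continuant ((List.range (m + 1)).map
        (fun i => α i + (if i = 0 then 1 else 0) + (if i = m then 1 else 0)))
      ≤ fibF (n + 2) ∧
    (continuant ((List.range (m + 1)).map
        (fun i => α i + (if i = 0 then 1 else 0) + (if i = m then 1 else 0)))
      = fibF (n + 2) ↔
      (m = n ∧ α 0 = 0 ∧ ∀ i, 1 ≤ i → i ≤ n → α i = 1) ∨
      (m + 1 = n ∧ ∀ i, i ≤ n - 1 → α i = 1)) := by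
  set L := ((List.range (m + 1)).map (bumpEnds α m)).reverse
  change contAux L ≤ _ ∧ (contAux L = _ ↔ _)
  have hpos : ∀ x ∈ L, 0 < x := by
    simp only [L, List.mem_reverse, List.mem_map, List.mem_range]
    rintro _ ⟨i, hi, rfl⟩
    exact bumpEnds_pos h1 (Nat.lt_succ_iff.mp hi)
  have hL : L.sum = n + 2 := by
    rw [List.sum_reverse, ← hsum, ← sum_bumpEnds, Finset.sum_eq_multiset_sum, Finset.range_val,
      Multiset.range, Multiset.map_coe, Multiset.sum_coe]
  rw [← hL]
  exact ⟨contAux_le_fibF_sum L hpos, (contAux_eq_fibF_sum_iff L hpos).trans <|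
    (isFibShape_reverse_map_bumpEnds_iff h1).trans (le_one_and_ones_iff_of_sum_eq hsum)⟩
end
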